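/- arXiv:1411.3791 — 2 statements merged into one kernel-verified Lean document; each statement's English description precedes it below -/
import Mathlib

section
/- External choices on inputs can be extended under the subcontract relation for output persistent contracts: a+b ⪯ a, for any distinct input action names a and b. -/
/-!
Formalization of choreographies, orchestrations and behavioural contracts
following Bravetti–Zavattaro, "Choreographies and Behavioural Contracts on
the Way to Dynamic Updates".
-/

/-- Action names (a denumerable set). -/
abbrev AName := ℕ
/-- Roles. -/
abbrev Role := ℕ

/-! ### The choreography calculus -/

/-- Choreographies, including the auxiliary terms `one` (successful completion)
and `zero` (halt). -/
inductive Chor : Type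
  | comm : AName → Role → Role → Chor      -- a_{r→s}
  | choice : Chor → Chor → Chor
  | seq : Chor → Chor → Chor
  | par : Chor → Chor → Chor
  | star : Chor → Chor
  | one : Chor
  | zero : Chor
  deriving DecidableEq

/-- Labels of the choreography semantics: interactions `a_{r→s}` and `√`. -/
inductive CLabel : Type
  | comm : AName → Role → Role → CLabel
  | tick : CLabel
  deriving DecidableEq

/-- Operational semantics of choreographies. -/
inductive CStep : Chor → CLabel → Chor → Prop
  | comm : CStep (.comm a r s) (.comm a r s) .one
  | one : CStep .one .tick .zero
  | starTick : CStep (.star H) .tick .zero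
  | choiceL : CStep H η H' → CStep (.choice H L) η H'
  | choiceR : CStep L η L' → CStep (.choice H L) η L'
  | seqL : CStep H η H' → η ≠ .tick → CStep (.seq H L) η (.seq H' L)
  | seqTick : CStep H .tick H' → CStep L η L' → CStep (.seq H L) η L'
  | parL : CStep H η H' → η ≠ .tick → CStep (.par H L) η (.par H' L)
  | parR : CStep L η L' → η ≠ .tick → CStep (.par H L) η (.par H L')
  | parTick : CStep H .tick H' → CStep L .tick L' → CStep (.par H L) .tick (.par H' L')
  | starStep : CStep H η H' → η ≠ .tick → CStep (.star H) η (.seq H' (.star H))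

/-- Roles syntactically occurring in a choreography. -/
def rolesC : Chor → Finset Role
  | .comm _ r s => {r, s}
  | .choice H L | .seq H L | .par H L => rolesC H ∪ rolesC L
  | .star H => rolesC H
  | .one | .zero => ∅

/-- Action names syntactically occurring in a choreography. -/
def namesC : Chor → Finset AName
  | .comm a _ _ => {a}
  | .choice H L | .seq H L | .par H L => namesC H ∪ namesC L
  | .star H => namesC H
  | .one | .zero => ∅

/-! ### The orchestration calculus -/

/-- Orchestrations (also used as behavioural contract terms). -/
inductive Orc : Type
  | zero : Orc
  | one : Orc
  | tau : Orc
  | inp : AName → Orc              -- receive a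
  | out : AName → Role → Orc       -- invoke ā directed to role l
  | seq : Orc → Orc → Orc
  | choice : Orc → Orc → Orc
  | par : Orc → Orc → Orc
  | star : Orc → Orc
  deriving DecidableEq

/-- Labels of the orchestration/contract semantics. -/
inductive OLabel : Type
  | tau : OLabel
  | inp : AName → OLabel
  | out : AName → Role → OLabel
  | tick : OLabel
  deriving DecidableEq

/-- Operational semantics of orchestrations/contracts. -/
inductive OStep : Orc → OLabel → Orc → Prop
  | one : OStep .one .tick .zero
  | tau : OStep .tau .tau .one
  | inp : OStep (.inp a) (.inp a) .one
  | out : OStep (.out a l) (.out a l) .one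
  | choiceL : OStep C μ C' → OStep (.choice C D) μ C'
  | choiceR : OStep D μ D' → OStep (.choice C D) μ D'
  | seqL : OStep C μ C' → μ ≠ .tick → OStep (.seq C D) μ (.seq C' D)
  | seqTick : OStep C .tick C' → OStep D μ D' → OStep (.seq C D) μ D'
  | parL : OStep C μ C' → μ ≠ .tick → OStep (.par C D) μ (.par C' D)
  | parR : OStep D μ D' → μ ≠ .tick → OStep (.par C D) μ (.par C D')
  | parTick : OStep C .tick C' → OStep D .tick D' → OStep (.par C D) .tick (.par C' D')
  | starTick : OStep (.star C) .tick .zero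
  | starStep : OStep C μ C' → μ ≠ .tick → OStep (.star C) μ (.seq C' (.star C))

/-! ### Systems (compositions of located orchestrations/contracts) -/

/-- Systems: parallel compositions of located orchestrations `[C]_l`. -/
inductive Sys : Type
  | atom : Orc → Role → Sys
  | par : Sys → Sys → Sys
  deriving DecidableEq

/-- Labels of the system semantics. -/
inductive SLabel : Type
  | tau : SLabel
  | inp : AName → Role → SLabel            -- a_s
  | out : AName → Role → Role → SLabel     -- ā_{r s}
  | comm : AName → Role → Role → SLabel    -- a_{r→s}
  | tick : SLabel
  deriving DecidableEq

/-- Operational semantics of systems. -/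
inductive SStep : Sys → SLabel → Sys → Prop
  | atomTau : OStep C .tau C' → SStep (.atom C r) .tau (.atom C' r)
  | atomInp : OStep C (.inp a) C' → SStep (.atom C r) (.inp a r) (.atom C' r)
  | atomOut : OStep C (.out a s) C' → SStep (.atom C r) (.out a r s) (.atom C' r)
  | atomTick : OStep C .tick C' → SStep (.atom C r) .tick (.atom C' r)
  | parL : SStep P μ P' → μ ≠ .tick → SStep (.par P Q) μ (.par P' Q)
  | parR : SStep Q μ Q' → μ ≠ .tick → SStep (.par P Q) μ (.par P Q')
  | commLR : SStep P (.out a r s) P' → SStep Q (.inp a s) Q' →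
      SStep (.par P Q) (.comm a r s) (.par P' Q')
  | commRL : SStep P (.inp a s) P' → SStep Q (.out a r s) Q' →
      SStep (.par P Q) (.comm a r s) (.par P' Q')
  | parTick : SStep P .tick P' → SStep Q .tick Q' → SStep (.par P Q) .tick (.par P' Q')

/-- One step of a completely specified system: an internal `τ` step or a
completed interaction `a_{r→s}`. -/
def CompleteStep (P P' : Sys) : Prop :=
  SStep P .tau P' ∨ ∃ a r s, SStep P (.comm a r s) P'

/-- Reachability through complete (τ / completed-interaction) steps. -/
inductive Reach : Sys → Sys → Prop
  | refl (P) : Reach P P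
  | step : CompleteStep P P' → Reach P' P'' → Reach P P''

/-- `P` can perform the successful-termination label `√`. -/
def CanTick (P : Sys) : Prop := ∃ P', SStep P .tick P'

/-- Correct composition `P↓`: every reachable state can reach a state able to
perform `√`. -/
def Correct (P : Sys) : Prop :=
  ∀ P', Reach P P' → ∃ P'', Reach P' P'' ∧ CanTick P''

/-- `WTrace P w` is the weak transition `P ⇒^{w√}`: `P` performs the sequence
`w` of completed interactions `a_{r→s}` (absorbing `τ` steps) and then `√`. -/
inductive WTrace : Sys → List (AName × Role × Role) → Prop
  | tick : CanTick P → WTrace P []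
  | tau : SStep P .tau P' → WTrace P' w → WTrace P w
  | comm : SStep P (.comm a r s) P' → WTrace P' w → WTrace P ((a, r, s) :: w)

/-- `CTrace H w` is the transition sequence `H →^{w√}`. -/
inductive CTrace : Chor → List (AName × Role × Role) → Prop
  | tick : CStep H .tick H' → CTrace H []
  | comm : CStep H (.comm a r s) H' → CTrace H' w → CTrace H ((a, r, s) :: w)

/-- `P` implements `H` (written `P ∝ H`): `P` is a correct composition and all
its conversations (followed by `√`) are admitted by `H`. -/
def Implements (P : Sys) (H : Chor) : Prop :=
  Correct P ∧ ∀ w, WTrace P w → CTrace H w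

/-! ### Projection and well-formedness -/

/-- Projection of a choreography on a role (homomorphic over all operators). -/
def proj : Chor → Role → Orc
  | .comm a r s, t => if t = r then .out a s else if t = s then .inp a else .one
  | .choice H L, t => .choice (proj H t) (proj L t)
  | .seq H L, t => .seq (proj H t) (proj L t)
  | .par H L, t => .par (proj H t) (proj L t)
  | .star H, t => .star (proj H t)
  | .one, _ => .one
  | .zero, _ => .zero

/-- Parallel composition of a list of located contracts
`[C_1]_{l_1} || … || [C_n]_{l_n}`. -/
def composeC : List (Orc × Role) → Sys
  | [] => .atom .one 0
  | [(C, l)] => .atom C l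
  | (C, l) :: x :: xs => .par (.atom C l) (composeC (x :: xs))

/-- Well-formed choreography: the system obtained by projecting `H` on all its
roles implements `H` (for any enumeration of its roles). -/
def WellFormed (H : Chor) : Prop :=
  ∀ L : List Role, L.Nodup → L.toFinset = rolesC H →
    Implements (composeC (L.map fun r => (proj H r, r))) H

/-! ### Behavioural contracts: basic notions -/

/-- Roles targeted by output actions syntactically occurring in a contract. -/
def oroles : Orc → Finset Role
  | .out _ l => {l}
  | .seq C D | .choice C D | .par C D => oroles C ∪ oroles D
  | .star C => oroles C
  | _ => ∅

/-- Input action names syntactically occurring in a contract: `I(C)`. -/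
def inames : Orc → Finset AName
  | .inp a => {a}
  | .seq C D | .choice C D | .par C D => inames C ∪ inames D
  | .star C => inames C
  | _ => ∅

/-- `C \\ M`: replace every input on a name in `M` occurring in `C` by `0`. -/
def restrict (C : Orc) (M : Finset AName) : Orc :=
  match C with
  | .inp a => if a ∈ M then .zero else .inp a
  | .seq C D => .seq (restrict C M) (restrict D M)
  | .choice C D => .choice (restrict C M) (restrict D M)
  | .par C D => .par (restrict C M) (restrict D M)
  | .star C => .star (restrict C M)
  | C => C

/-- Reachability in the contract LTS (through any labels). -/
inductive OReach : Orc → Orc → Prop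
  | refl (C) : OReach C C
  | step : OStep C μ C' → OReach C' C'' → OReach C C''

/-- Output persistence: once a contract decides to execute an output, its
actual execution is mandatory to reach successful termination. -/
def OutputPersistent (C : Orc) : Prop :=
  ∀ C', OReach C C' → ∀ a l, (∃ D, OStep C' (.out a l) D) →
    (¬ ∃ D, OStep C' .tick D) ∧
    (∀ μ C'', OStep C' μ C'' → μ ≠ .out a l → ∃ D, OStep C'' (.out a l) D)

/-- The list of roles of the located contracts occurring in a system. -/
def rolesList : Sys → List Role
  | .atom _ r => [r]
  | .par P Q => rolesList P ++ rolesList Q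

/-- No contract sends outputs to its own role. -/
def NoSelfOut : Sys → Prop
  | .atom C r => r ∉ oroles C
  | .par P Q => NoSelfOut P ∧ NoSelfOut Q

/-- Well-formed system: pairwise distinct roles, no output to one's own role. -/
def WFSys (P : Sys) : Prop := (rolesList P).Nodup ∧ NoSelfOut P

/-- All contracts occurring in the system are output persistent. -/
def AllOP : Sys → Prop
  | .atom C _ => OutputPersistent C
  | .par P Q => AllOP P ∧ AllOP Q

/-- The subcontract relation `C' ⪯ C` (compliance testing): for every fresh
role `l` and every test composition `P` of output persistent contracts not
using `l`, correctness of `[C]_l || P` implies correctness of `[C']_l || P`. -/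
def Subcontract (C' C : Orc) : Prop :=
  ∀ l : Role, l ∉ oroles C ∪ oroles C' →
    ∀ P : Sys, AllOP P → WFSys P → l ∉ rolesList P →
      Correct (.par (.atom C l) P) → Correct (.par (.atom C' l) P)

/-- Independent subcontract pre-order over output persistent contracts:
a pre-order such that refining any number of contracts of a correct system
independently preserves correctness. -/
def IndepSubcontractPre (le : Orc → Orc → Prop) : Prop :=
  (∀ C, OutputPersistent C → le C C) ∧
  (∀ C₁ C₂ C₃, OutputPersistent C₁ → OutputPersistent C₂ → OutputPersistent C₃ →
      le C₁ C₂ → le C₂ C₃ → le C₁ C₃) ∧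
  (∀ L : List (Orc × Orc × Role), L ≠ [] →
    (∀ x ∈ L, OutputPersistent x.1 ∧ OutputPersistent x.2.1 ∧ le x.2.1 x.1) →
    (L.map fun x => x.2.2).Nodup →
    (∀ x ∈ L, x.2.2 ∉ oroles x.1 ∪ oroles x.2.1) →
    Correct (composeC (L.map fun x => (x.1, x.2.2))) →
    Correct (composeC (L.map fun x => (x.2.1, x.2.2))))

/-- An uncontrollable contract: no test composition can lead it to success. -/
def Uncontrollable (C : Orc) : Prop :=
  ¬ ∃ (l : Role) (P : Sys), l ∉ oroles C ∧ AllOP P ∧ WFSys P ∧ l ∉ rolesList P ∧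
      Correct (.par (.atom C l) P)

/-- Weak traces of a contract: sequences of visible labels, absorbing `τ`. -/
inductive WOTrace : Orc → List OLabel → Prop
  | nil (C) : WOTrace C []
  | tau : OStep C .tau C' → WOTrace C' w → WOTrace C w
  | vis : OStep C μ C' → μ ≠ .tau → WOTrace C' w → WOTrace C (μ :: w)

/-! ### Should-testing (fair testing) à la Rensink–Vogler -/

/-- Labels of tests: internal moves, synchronization with a (visible) action of
the tested contract (`√` included as any other action), and test success `√'`. -/
inductive TLab : Type
  | tau : TLab
  | sync : OLabel → TLab
  | succ : TLab

/-- A test: a labelled transition system over `TLab`. -/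
structure TestLTS where
  S : Type
  step : S → TLab → S → Prop
  init : S

/-- Steps of a contract/test configuration. -/
inductive TCStep (T : TestLTS) : (Orc × T.S) → (Orc × T.S) → Prop
  | ctau : OStep C .tau C' → TCStep T (C, t) (C', t)
  | ttau : T.step t .tau t' → TCStep T (C, t) (C, t')
  | sync : OStep C μ C' → μ ≠ OLabel.tau → T.step t (.sync μ) t' → TCStep T (C, t) (C', t')

/-- Reachability of configurations. -/
inductive TCReach (T : TestLTS) : (Orc × T.S) → (Orc × T.S) → Prop
  | refl (c) : TCReach T c c
  | step : TCStep T c c' → TCReach T c' c'' → TCReach T c c''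

/-- `C` should-passes `T`: from every reachable configuration a configuration
in which the test can perform the success action is reachable. -/
def Shd (C : Orc) (T : TestLTS) : Prop :=
  ∀ c, TCReach T (C, T.init) c → ∃ c', TCReach T c c' ∧ ∃ t', T.step c'.2 .succ t'

/-- The should-testing (fair testing) pre-order: `ShouldPre C' C` holds iff
every test that `C` should-passes is also should-passed by `C'`. -/
def ShouldPre (C' C : Orc) : Prop := ∀ T : TestLTS, Shd C T → Shd C' T

/-- The normal form `NF(C)`: the recursive-equations presentation of the LTS of
`C`.  Since contracts are here represented directly by LTS-denoting terms and
the should-testing pre-order only depends on the underlying LTS, the normal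
form is the term itself. -/
def NF (C : Orc) : Orc := C


/-!
If `[a + b]_l ‖ P` consumed an output `b̄` directed to `l`, that output would already be pending in
`[a]_l ‖ P`. Output persistence keeps it pending as long as `l` does not accept `b`, which `a` never
does, and a pending output forbids `√`; so correctness of `[a]_l ‖ P` rules the `b` branch out.
Every other move of either system is matched by the other one, and `[a]_l ‖ Q` cannot perform `√`,
so correctness transfers.
-/

theorem OutputPersistent.of_step {C C' : Orc} {μ : OLabel} (hC : OutputPersistent C)
    (hs : OStep C μ C') : OutputPersistent C' :=
  fun D hr => hC D (.step hs hr)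

theorem OutputPersistent.out_of_step {C C' D : Orc} {μ : OLabel} {b : AName} {l : Role}
    (hC : OutputPersistent C) (hout : OStep C (.out b l) D) (hs : OStep C μ C')
    (hμ : μ ≠ .out b l) : ∃ D', OStep C' (.out b l) D' :=
  (hC C (.refl C) b l ⟨D, hout⟩).2 μ C' hs hμ

theorem OutputPersistent.not_tick_of_out {C C' D : Orc} {b : AName} {l : Role}
    (hC : OutputPersistent C) (hout : OStep C (.out b l) D) : ¬ OStep C .tick C' :=
  fun ht => (hC C (.refl C) b l ⟨D, hout⟩).1 ⟨C', ht⟩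

theorem AllOP.of_step {Q Q' : Sys} {μ : SLabel} (hQ : AllOP Q) (hs : SStep Q μ Q') :
    AllOP Q' := by
  induction hs with
  | atomTau h | atomInp h | atomOut h | atomTick h => exact OutputPersistent.of_step hQ h
  | parL _ _ ih => exact ⟨ih hQ.1, hQ.2⟩
  | parR _ _ ih => exact ⟨hQ.1, ih hQ.2⟩
  | commLR _ _ ih₁ ih₂ | commRL _ _ ih₁ ih₂ | parTick _ _ ih₁ ih₂ => exact ⟨ih₁ hQ.1, ih₂ hQ.2⟩

theorem SStep.rolesList_eq {Q Q' : Sys} {μ : SLabel} (hs : SStep Q μ Q') :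
    rolesList Q' = rolesList Q := by
  induction hs <;> simp_all [rolesList]

theorem SStep.mem_rolesList_of_inp {Q Q' : Sys} {a : AName} {s : Role}
    (hs : SStep Q (.inp a s) Q') : s ∈ rolesList Q := by
  generalize hμ : SLabel.inp a s = μ at hs
  induction hs <;> cases hμ <;> simp_all [rolesList]

theorem SStep.mem_rolesList_of_comm {Q Q' : Sys} {a : AName} {r s : Role}
    (hs : SStep Q (.comm a r s) Q') : s ∈ rolesList Q := by
  generalize hμ : SLabel.comm a r s = μ at hs
  induction hs with
  | commLR _ hinp => cases hμ; exact List.mem_append_right _ hinp.mem_rolesList_of_inp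
  | commRL hinp _ => cases hμ; exact List.mem_append_left _ hinp.mem_rolesList_of_inp
  | parL _ _ ih => exact List.mem_append_left _ (ih hμ)
  | parR _ _ ih => exact List.mem_append_right _ (ih hμ)
  | _ => cases hμ

/-- Output persistence lifted to systems. -/
theorem AllOP.out_of_step {Q Q' Qb : Sys} {μ : SLabel} {b : AName} {r l : Role}
    (hQ : AllOP Q) (hout : SStep Q (.out b r l) Qb) (hs : SStep Q μ Q')
    (hμo : μ ≠ .out b r l) (hμc : μ ≠ .comm b r l) : ∃ Qb', SStep Q' (.out b r l) Qb' := by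
  induction hs generalizing Qb with
  | atomTau h | atomInp h =>
    cases hout with
    | atomOut h' =>
      obtain ⟨D, hD⟩ := OutputPersistent.out_of_step hQ h' h nofun
      exact ⟨_, .atomOut hD⟩
  | atomOut h =>
    cases hout with
    | atomOut h' =>
      obtain ⟨D, hD⟩ := OutputPersistent.out_of_step hQ h' h (fun he => hμo (by cases he; rfl))
      exact ⟨_, .atomOut hD⟩
  | atomTick h =>
    cases hout with
    | atomOut h' => exact absurd h (OutputPersistent.not_tick_of_out hQ h')
  | parL _ _ ih =>
    cases hout with
    | parL e _ =>
      obtain ⟨_, e'⟩ := ih hQ.1 e hμo hμc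
      exact ⟨_, .parL e' nofun⟩
    | parR e _ => exact ⟨_, .parR e nofun⟩
  | parR _ _ ih =>
    cases hout with
    | parL e _ => exact ⟨_, .parL e nofun⟩
    | parR e _ =>
      obtain ⟨_, e'⟩ := ih hQ.2 e hμo hμc
      exact ⟨_, .parR e' nofun⟩
  | commLR _ _ ih₁ ih₂ | commRL _ _ ih₁ ih₂ | parTick _ _ ih₁ ih₂ =>
    cases hout with
    | parL e _ =>
      obtain ⟨_, e'⟩ := ih₁ hQ.1 e (fun he => hμc (by cases he <;> rfl)) nofun
      exact ⟨_, .parL e' nofun⟩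
    | parR e _ =>
      obtain ⟨_, e'⟩ := ih₂ hQ.2 e (fun he => hμc (by cases he <;> rfl)) nofun
      exact ⟨_, .parR e' nofun⟩

theorem AllOP.not_tick_of_out {Q Q' Qb : Sys} {b : AName} {r l : Role} (hQ : AllOP Q)
    (hout : SStep Q (.out b r l) Qb) : ¬ SStep Q .tick Q' := by
  induction Q generalizing Q' Qb with
  | atom C _ =>
    intro ht
    cases ht with
    | atomTick h =>
      cases hout with
      | atomOut h' => exact OutputPersistent.not_tick_of_out hQ h' h
  | par Q₁ Q₂ ih₁ ih₂ =>
    intro ht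
    cases ht with
    | parL _ hne | parR _ hne => exact hne rfl
    | parTick t₁ t₂ =>
      cases hout with
      | parL e _ => exact ih₁ hQ.1 e t₁
      | parR e _ => exact ih₂ hQ.2 e t₂

theorem CompleteStep.allOP {Q Q' : Sys} (hs : CompleteStep Q Q') (hQ : AllOP Q) : AllOP Q' := by
  rcases hs with hs | ⟨_, _, _, hs⟩ <;> exact hQ.of_step hs

theorem CompleteStep.rolesList_eq {Q Q' : Sys} (hs : CompleteStep Q Q') :
    rolesList Q' = rolesList Q := by
  rcases hs with hs | ⟨_, _, _, hs⟩ <;> exact hs.rolesList_eq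

theorem CompleteStep.par_right {Q Q' : Sys} (D : Orc) (l : Role) (hs : CompleteStep Q Q') :
    CompleteStep (.par (.atom D l) Q) (.par (.atom D l) Q') := by
  rcases hs with hs | ⟨a, r, s, hs⟩
  · exact .inl (.parR hs nofun)
  · exact .inr ⟨a, r, s, .parR hs nofun⟩

theorem CompleteStep.atom_par_cases {D : Orc} {l : Role} {Q S : Sys}
    (hs : CompleteStep (.par (.atom D l) Q) S) :
    (∃ D', OStep D .tau D' ∧ S = .par (.atom D' l) Q) ∨
    (∃ Q', CompleteStep Q Q' ∧ S = .par (.atom D l) Q') ∨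
    (∃ a s D' Q', OStep D (.out a s) D' ∧ SStep Q (.inp a s) Q' ∧ S = .par (.atom D' l) Q') ∨
    (∃ a r D' Q', OStep D (.inp a) D' ∧ SStep Q (.out a r l) Q' ∧
      S = .par (.atom D' l) Q') := by
  rcases hs with hs | ⟨a, r, s, hs⟩
  · cases hs with
    | parL h _ => cases h with | atomTau h => exact .inl ⟨_, h, rfl⟩
    | parR h _ => exact .inr (.inl ⟨_, .inl h, rfl⟩)
  · cases hs with
    | parL h _ => cases h
    | parR h _ => exact .inr (.inl ⟨_, .inr ⟨a, r, s, h⟩, rfl⟩)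
    | commLR h₁ h₂ =>
      cases h₁ with | atomOut h₁ => exact .inr (.inr (.inl ⟨_, _, _, _, h₁, h₂, rfl⟩))
    | commRL h₁ h₂ =>
      cases h₁ with | atomInp h₁ => exact .inr (.inr (.inr ⟨_, _, _, _, h₁, h₂, rfl⟩))

theorem Reach.tail {P Q R : Sys} (h : Reach P Q) (hs : CompleteStep Q R) : Reach P R := by
  induction h with
  | refl => exact .step hs (.refl R)
  | step h' _ ih => exact .step h' (ih hs)

theorem Reach.exists_of_simulation {R : Sys → Sys → Prop}
    (hR : ∀ {S S' T}, R S T → CompleteStep S S' → ∃ T', CompleteStep T T' ∧ R S' T')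
    {S S' T : Sys} (h : Reach S S') (hST : R S T) : ∃ T', Reach T T' ∧ R S' T' := by
  induction h generalizing T with
  | refl => exact ⟨T, .refl T, hST⟩
  | step hs _ ih =>
    obtain ⟨T₁, hT₁, hR₁⟩ := hR hST hs
    obtain ⟨T', hT', hR'⟩ := ih hR₁
    exact ⟨T', .step hT₁ hT', hR'⟩

def NeverInputs (b : AName) (D : Orc) : Prop :=
  ∀ D' D'', OReach D D' → ¬ OStep D' (.inp b) D''

theorem NeverInputs.of_step {b : AName} {D D' : Orc} {μ : OLabel} (hD : NeverInputs b D)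
    (hs : OStep D μ D') : NeverInputs b D' :=
  fun _ _ hr => hD _ _ (.step hs hr)

theorem neverInputs_inp {a b : AName} (hab : a ≠ b) : NeverInputs b (.inp a) := by
  rintro D' D'' (_ | ⟨⟨⟩, _ | ⟨⟨⟩, _ | ⟨⟨⟩, _⟩⟩⟩) hs
  all_goals cases hs
  exact hab rfl

def HasStuckOutput (b : AName) (l : Role) (S : Sys) : Prop :=
  ∃ D Q r Qb, S = .par (.atom D l) Q ∧ NeverInputs b D ∧ AllOP Q ∧ l ∉ rolesList Q ∧
    SStep Q (.out b r l) Qb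

theorem HasStuckOutput.step {b : AName} {l : Role} {S S' : Sys} (h : HasStuckOutput b l S)
    (hs : CompleteStep S S') : HasStuckOutput b l S' := by
  obtain ⟨D, Q, r, Qb, rfl, hD, hQ, hl, hout⟩ := h
  rcases hs.atom_par_cases with ⟨D', hD', rfl⟩ | ⟨Q', hQ', rfl⟩ | ⟨a, s, D', Q', hD', hQ', rfl⟩ |
      ⟨a, r', D', Q', hD', hQ', rfl⟩
  · exact ⟨D', Q, r, Qb, rfl, hD.of_step hD', hQ, hl, hout⟩
  · obtain ⟨Qb', hout'⟩ : ∃ Qb', SStep Q' (.out b r l) Qb' := by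
      rcases hQ' with hQ' | ⟨a, r', s, hQ'⟩
      · exact hQ.out_of_step hout hQ' nofun nofun
      · refine hQ.out_of_step hout hQ' nofun fun he => ?_
        cases he
        exact hl hQ'.mem_rolesList_of_comm
    exact ⟨D, Q', r, Qb', rfl, hD, hQ'.allOP hQ, hQ'.rolesList_eq ▸ hl, hout'⟩
  · obtain ⟨Qb', hout'⟩ := hQ.out_of_step hout hQ' nofun nofun
    exact ⟨D', Q', r, Qb', rfl, hD.of_step hD', hQ.of_step hQ', hQ'.rolesList_eq ▸ hl, hout'⟩
  · have hab : a ≠ b := by rintro rfl; exact hD _ _ (.refl D) hD'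
    obtain ⟨Qb', hout'⟩ := hQ.out_of_step hout hQ' (fun he => by cases he; exact hab rfl) nofun
    exact ⟨D', Q', r, Qb', rfl, hD.of_step hD', hQ.of_step hQ', hQ'.rolesList_eq ▸ hl, hout'⟩

theorem HasStuckOutput.not_canTick {b : AName} {l : Role} {S : Sys} (h : HasStuckOutput b l S) :
    ¬ CanTick S := by
  obtain ⟨D, Q, r, Qb, rfl, -, hQ, -, hout⟩ := h
  rintro ⟨S', ht⟩
  cases ht with
  | parL _ hne | parR _ hne => exact hne rfl
  | parTick _ ht => exact hQ.not_tick_of_out hout ht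

theorem Correct.not_hasStuckOutput {b : AName} {l : Role} {O S : Sys} (hO : Correct O)
    (hS : Reach O S) : ¬ HasStuckOutput b l S := by
  intro h
  obtain ⟨S', hSS', htick⟩ := hO S hS
  induction hSS' with
  | refl => exact h.not_canTick htick
  | step hs _ ih => exact ih (hS.tail hs) (h.step hs) htick

def InputExtRel (a b : AName) (l : Role) (S T : Sys) : Prop :=
  S = T ∨ ∃ Q, AllOP Q ∧ l ∉ rolesList Q ∧
    S = .par (.atom (.inp a) l) Q ∧ T = .par (.atom (.choice (.inp a) (.inp b)) l) Q

theorem InputExtRel.par_right {a b : AName} {l : Role} {Q Q' : Sys} (hQ : AllOP Q)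
    (hl : l ∉ rolesList Q) (hs : CompleteStep Q Q') :
    InputExtRel a b l (.par (.atom (.inp a) l) Q')
      (.par (.atom (.choice (.inp a) (.inp b)) l) Q') :=
  .inr ⟨Q', hs.allOP hQ, hs.rolesList_eq ▸ hl, rfl, rfl⟩

theorem InputExtRel.forward {a b : AName} {l : Role} {S S' T : Sys} (hST : InputExtRel a b l S T)
    (hs : CompleteStep S S') : ∃ T', CompleteStep T T' ∧ InputExtRel a b l S' T' := by
  obtain rfl | ⟨Q, hQ, hl, rfl, rfl⟩ := hST
  · exact ⟨S', hs, .inl rfl⟩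
  rcases hs.atom_par_cases with ⟨_, hD, _⟩ | ⟨Q', hQ', rfl⟩ | ⟨_, _, _, _, hD, _⟩ |
      ⟨_, r, _, Q', hD, hQ', rfl⟩
  · nomatch hD
  · exact ⟨_, hQ'.par_right _ l, .par_right hQ hl hQ'⟩
  · nomatch hD
  · cases hD
    exact ⟨_, .inr ⟨a, r, l, .commRL (.atomInp (.choiceL .inp)) hQ'⟩, .inl rfl⟩

theorem InputExtRel.backward {a b : AName} {l : Role} {O S T T' : Sys} (hab : a ≠ b)
    (hO : Correct O) (hS : Reach O S) (hST : InputExtRel a b l S T) (hs : CompleteStep T T') :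
    ∃ S', CompleteStep S S' ∧ InputExtRel a b l S' T' := by
  obtain rfl | ⟨Q, hQ, hl, rfl, rfl⟩ := hST
  · exact ⟨T', hs, .inl rfl⟩
  rcases hs.atom_par_cases with ⟨_, hD, _⟩ | ⟨Q', hQ', rfl⟩ | ⟨_, _, _, _, hD, _⟩ |
      ⟨_, r, _, Q', hD, hQ', rfl⟩
  · nomatch hD
  · exact ⟨_, hQ'.par_right _ l, .par_right hQ hl hQ'⟩
  · nomatch hD
  · cases hD with
    | choiceL hD =>
      cases hD
      exact ⟨_, .inr ⟨a, r, l, .commRL (.atomInp .inp) hQ'⟩, .inl rfl⟩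
    | choiceR hD =>
      cases hD
      exact (hO.not_hasStuckOutput hS ⟨_, Q, r, _, rfl, neverInputs_inp hab, hQ, hl, hQ'⟩).elim

theorem InputExtRel.canTick {a b : AName} {l : Role} {S T : Sys} (hST : InputExtRel a b l S T)
    (hS : CanTick S) : CanTick T := by
  obtain rfl | ⟨Q, -, -, rfl, rfl⟩ := hST
  · exact hS
  obtain ⟨_, ht⟩ := hS
  cases ht with
  | parL _ hne | parR _ hne => exact (hne rfl).elim
  | parTick ht _ => cases ht with | atomTick ht => cases ht

/-- External choices on inputs can be extended under the
subcontract relation for output persistent contracts: `a+b ⪯ a` for any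
distinct input action names `a` and `b`. -/
theorem input_choice_extension (a b : AName) (hab : a ≠ b) :
    Subcontract (.choice (.inp a) (.inp b)) (.inp a) := by
  intro l _ P hP _ hlP hC T hT
  obtain ⟨S, -, hS, hST⟩ :=
    Reach.exists_of_simulation
      (R := fun T S => Reach (.par (.atom (.inp a) l) P) S ∧ InputExtRel a b l S T)
      (fun ⟨hS, hST⟩ hs =>
        let ⟨S', hs', hST'⟩ := hST.backward hab hC hS hs
        ⟨S', hs', hS.tail hs', hST'⟩)
      hT ⟨.refl _, .inr ⟨P, hP, hlP, rfl, rfl⟩⟩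
  obtain ⟨S', hSS', htick⟩ := hC S hS
  obtain ⟨T', hTT', hST'⟩ := Reach.exists_of_simulation InputExtRel.forward hSS' hST
  exact ⟨T', hTT', hST'.canTick htick⟩
end

section
/- Trace inclusion is not coarser than the subcontract relation: there exist output persistent contracts C and C' with C' ⪯ C such that some sequence of visible actions performable by C' is not performable by C (e.g. C = 0 and C' = a;b;0 satisfy a;b;0 ⪯ 0, yet a;b;0 has the trace ab which 0 does not have). -/
/-- `a;b;0` -/
def inSeq0 (a b : AName) : Orc := .seq (.inp a) (.seq (.inp b) .zero)

/-! `[0]_l` can never perform `√`, and in a system every `√` is global, so no composition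
containing `[0]_l` is correct: every contract is a subcontract of `0`, vacuously. Contracts
without outputs are output persistent, vacuously as well. -/

theorem OStep.oroles_subset {C C' : Orc} {μ : OLabel} (h : OStep C μ C') :
    oroles C' ⊆ oroles C := by
  induction h with
  | one | tau | inp | out | starTick => simp [oroles]
  | choiceL _ ih | seqTick _ _ _ ih => exact ih.trans (by simp [oroles])
  | choiceR _ ih => exact ih.trans (by simp [oroles])
  | seqL _ _ ih | parL _ _ ih => exact Finset.union_subset_union ih subset_rfl
  | parR _ _ ih => exact Finset.union_subset_union subset_rfl ih
  | parTick _ _ ih₁ ih₂ => exact Finset.union_subset_union ih₁ ih₂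
  | starStep _ _ ih => exact Finset.union_subset ih subset_rfl

theorem OStep.mem_oroles_of_out {C C' : Orc} {a : AName} {l : Role}
    (h : OStep C (.out a l) C') : l ∈ oroles C := by
  generalize hμ : OLabel.out a l = μ at h
  induction h with
  | one | tau | inp | parTick | starTick => cases hμ
  | out => cases hμ; simp [oroles]
  | choiceL _ ih | seqL _ _ ih | parL _ _ ih => simp [oroles, ih hμ]
  | choiceR _ ih | seqTick _ _ _ ih | parR _ _ ih => simp [oroles, ih hμ]
  | starStep _ _ ih => simpa [oroles] using ih hμ

theorem OReach.oroles_subset {C C' : Orc} (h : OReach C C') : oroles C' ⊆ oroles C := by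
  induction h with
  | refl => exact subset_rfl
  | step hs _ ih => exact ih.trans hs.oroles_subset

theorem outputPersistent_of_oroles_eq_empty {C : Orc} (h : oroles C = ∅) :
    OutputPersistent C := by
  rintro C' hreach a l ⟨D, hout⟩
  have := hreach.oroles_subset hout.mem_oroles_of_out
  simp [h] at this

theorem OStep.not_zero {μ : OLabel} {C : Orc} : ¬ OStep .zero μ C := nofun

theorem SStep.not_atom_zero {l : Role} {μ : SLabel} {P : Sys} :
    ¬ SStep (.atom .zero l) μ P := by
  rintro (h | h | h | h) <;> exact OStep.not_zero h

theorem CompleteStep.exists_eq_par_atom_zero {l : Role} {P Q : Sys}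
    (h : CompleteStep (.par (.atom .zero l) P) Q) : ∃ P', Q = .par (.atom .zero l) P' := by
  rcases h with h | ⟨a, r, s, h⟩ <;> cases h <;>
    first | exact ⟨_, rfl⟩ | exact absurd ‹SStep (.atom .zero l) _ _› SStep.not_atom_zero

theorem Reach.exists_eq_par_atom_zero {l : Role} {P Q : Sys}
    (h : Reach (.par (.atom .zero l) P) Q) :
    ∃ P', Q = .par (.atom .zero l) P' := by
  generalize hS : Sys.par (.atom .zero l) P = S at h
  induction h generalizing P with
  | refl => exact ⟨P, hS.symm⟩
  | step hstep _ ih =>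
    subst hS
    obtain ⟨P', rfl⟩ := hstep.exists_eq_par_atom_zero
    exact ih rfl

theorem not_canTick_par_atom_zero {l : Role} {P : Sys} : ¬ CanTick (.par (.atom .zero l) P) := by
  rintro ⟨Q, h⟩
  cases h with
  | parL _ hne | parR _ hne => exact hne rfl
  | parTick h _ => exact SStep.not_atom_zero h

theorem not_correct_par_atom_zero {l : Role} {P : Sys} : ¬ Correct (.par (.atom .zero l) P) := by
  intro h
  obtain ⟨Q, hreach, htick⟩ := h _ (Reach.refl _)
  obtain ⟨P', rfl⟩ := hreach.exists_eq_par_atom_zero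
  exact not_canTick_par_atom_zero htick

theorem subcontract_zero (C : Orc) : Subcontract C .zero :=
  fun _ _ _ _ _ _ h => absurd h not_correct_par_atom_zero

theorem WOTrace.eq_nil_of_zero {w : List OLabel} (h : WOTrace .zero w) : w = [] := by
  cases h with
  | nil => rfl
  | tau h | vis h => exact absurd h OStep.not_zero

theorem woTrace_inSeq0 (a b : AName) : WOTrace (inSeq0 a b) [.inp a, .inp b] :=
  .vis (.seqL .inp nofun) nofun <| .vis (.seqTick .one (.seqL .inp nofun)) nofun <| .nil _

/-- Trace inclusion is not coarser than the subcontract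
relation: there are output persistent contracts `C`, `C'` with `C' ⪯ C` such
that some sequence of visible actions of `C'` is not a trace of `C`; e.g.
`a;b;0 ⪯ 0`, yet `a;b;0` has the trace `ab`, which `0` does not have. -/
theorem trace_inclusion_not_coarser (a b : AName) :
    (∃ C C' : Orc, OutputPersistent C ∧ OutputPersistent C' ∧
      Subcontract C' C ∧ ∃ w, WOTrace C' w ∧ ¬ WOTrace C w) ∧
    Subcontract (inSeq0 a b) .zero ∧
    WOTrace (inSeq0 a b) [.inp a, .inp b] ∧
    ¬ WOTrace .zero [.inp a, .inp b] := by
  have hzero : ¬ WOTrace .zero [.inp a, .inp b] := fun h => nomatch h.eq_nil_of_zero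
  refine ⟨⟨.zero, inSeq0 a b, outputPersistent_of_oroles_eq_empty rfl,
    outputPersistent_of_oroles_eq_empty rfl, subcontract_zero _, _, woTrace_inSeq0 a b, hzero⟩,
    subcontract_zero _, woTrace_inSeq0 a b, hzero⟩
end
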